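/- Let f be a C^1 diffeomorphism of a compact Riemannian manifold M with two continuous Df-invariant sub-bundles E and F of TM, and let μ be an f-ergodic Borel probability measure. Suppose γ_1 < χ_E^−(μ) and γ_2 > χ_F^+(μ), where χ_E^−(μ) = lim_n (1/n) log m(Df^n|_{E(x)}) and χ_F^+(μ) = lim_n (1/n) log‖Df^n|_{F(x)}‖ for μ-a.e. x. Then μ(Λ_ℓ(γ_1, γ_2, E, F)) → 1 as ℓ → ∞, where Λ_ℓ(γ_1, γ_2, E, F) is the set of x such that for all n ∈ ℕ: (1/(nℓ))·Σ_{i=0}^{n−1} log m(Df^ℓ|_{E(f^{iℓ}x)}) ≥ γ_1 and (1/(nℓ))·Σ_{i=0}^{n−1} log‖Df^ℓ|_{F(f^{iℓ}x)}‖ ≤ γ_2. -/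

import Mathlib

open MeasureTheory Filter Topology

/-!
For fixed `ℓ`, truncate `w_ℓ = min (log m(Df^ℓ|_E) / ℓ) χ_E`. Garsia's maximal inequality for
`f^ℓ`, applied to `γ₁ - w_ℓ`, shows that the set where some Birkhoff average of `w_ℓ` along `f^ℓ`
drops below `γ₁` has measure at most `(χ_E - ∫ w_ℓ) / (χ_E - γ₁)`; this uses only `w_ℓ ≤ χ_E`.
Super-multiplicativity bounds `w_ℓ` from below uniformly in `ℓ`, so `∫ w_ℓ → χ_E` by dominated
convergence and the bad set has measure tending to `0`. The `F`-side is the same argument for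
the super-additive cocycle `-log ‖Df^ℓ|_F‖`.
-/

section MaximalErgodic

variable {α : Type*} {T : α → α} {w : α → ℝ}

/-- `birkhoffMax T w N x = max_{1 ≤ n ≤ N + 1} birkhoffSum T w n x`. -/
noncomputable def birkhoffMax (T : α → α) (w : α → ℝ) : ℕ → α → ℝ
  | 0 => w
  | N + 1 => fun x => w x + max (birkhoffMax T w N (T x)) 0

theorem birkhoffMax_succ_apply (N : ℕ) (x : α) :
    birkhoffMax T w (N + 1) x = w x + max (birkhoffMax T w N (T x)) 0 := rfl

theorem monotone_birkhoffMax (x : α) : Monotone fun N => birkhoffMax T w N x := by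
  refine monotone_nat_of_le_succ fun N => ?_
  induction N generalizing x with
  | zero => exact le_add_of_nonneg_right (le_max_right _ _)
  | succ N ih => exact add_le_add_right (max_le_max_right 0 (ih (T x))) _

theorem birkhoffSum_le_birkhoffMax (N : ℕ) (x : α) :
    birkhoffSum T w (N + 1) x ≤ birkhoffMax T w N x := by
  induction N generalizing x with
  | zero => simp [birkhoffMax]
  | succ N ih =>
    rw [birkhoffSum_succ', birkhoffMax_succ_apply]
    exact add_le_add_right ((ih (T x)).trans (le_max_left _ _)) _

theorem exists_birkhoffMax_le_birkhoffSum (N : ℕ) (x : α) :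
    ∃ n, birkhoffMax T w N x ≤ birkhoffSum T w (n + 1) x := by
  induction N generalizing x with
  | zero => exact ⟨0, by simp [birkhoffMax]⟩
  | succ N ih =>
    rw [birkhoffMax_succ_apply]
    rcases le_or_gt (birkhoffMax T w N (T x)) 0 with h | h
    · exact ⟨0, by simp [max_eq_right h]⟩
    · obtain ⟨n, hn⟩ := ih (T x)
      refine ⟨n + 1, ?_⟩
      rw [birkhoffSum_succ', max_eq_left h.le]
      exact add_le_add_right hn _

variable [MeasurableSpace α] {μ : Measure α}

theorem measurable_birkhoffMax (hT : Measurable T) (hw : Measurable w) (N : ℕ) :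
    Measurable (birkhoffMax T w N) := by
  induction N with
  | zero => exact hw
  | succ N ih => exact hw.add ((ih.comp hT).max measurable_const)

theorem integrable_birkhoffMax (hT : MeasurePreserving T μ μ) (hw : Integrable w μ) (N : ℕ) :
    Integrable (birkhoffMax T w N) μ := by
  induction N with
  | zero => exact hw
  | succ N ih => exact hw.add (hT.integrable_comp_of_integrable ih).pos_part

/-- Garsia's maximal ergodic inequality. -/
theorem setIntegral_birkhoffMax_pos_nonneg (hT : MeasurePreserving T μ μ) (hw : Measurable w)
    (hwi : Integrable w μ) (N : ℕ) : 0 ≤ ∫ x in {x | 0 < birkhoffMax T w N x}, w x ∂μ := by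
  set M := birkhoffMax T w N
  set E := {x | 0 < M x}
  have hM : Measurable M := measurable_birkhoffMax hT.measurable hw N
  have hE : MeasurableSet E := measurableSet_lt measurable_const hM
  have hMp : Integrable (fun x => max (M x) 0) μ := (integrable_birkhoffMax hT hwi N).pos_part
  have hMpT : Integrable (fun x => max (M (T x)) 0) μ := hT.integrable_comp_of_integrable hMp
  have hpointwise : ∀ x, max (M x) 0 ≤ E.indicator w x + max (M (T x)) 0 := by
    intro x
    by_cases hx : x ∈ E
    · rw [Set.indicator_of_mem hx, max_eq_left (le_of_lt hx)]
      exact (monotone_birkhoffMax x N.le_succ).trans_eq (birkhoffMax_succ_apply N x)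
    · rw [Set.indicator_of_notMem hx, max_eq_right (not_lt.mp hx), zero_add]
      exact le_max_right _ _
  have hinvariant : ∫ x, max (M (T x)) 0 ∂μ = ∫ x, max (M x) 0 ∂μ := by
    rw [← integral_map (f := fun x => max (M x) 0) hT.aemeasurable, hT.map_eq]
    exact (hM.max measurable_const).aestronglyMeasurable
  have := integral_mono hMp ((hwi.indicator hE).add hMpT) hpointwise
  rw [integral_add' (hwi.indicator hE) hMpT, hinvariant, integral_indicator hE] at this
  linarith

theorem measure_exists_birkhoffSum_lt_le [IsProbabilityMeasure μ] (hT : MeasurePreserving T μ μ)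
    (hw : Measurable w) (hwi : Integrable w μ) {γ K : ℝ} (hγK : γ < K) (hwK : ∀ x, w x ≤ K) :
    μ {x | ∃ n, 1 ≤ n ∧ birkhoffSum T w n x < n * γ} ≤
      ENNReal.ofReal ((K - ∫ x, w x ∂μ) / (K - γ)) := by
  set h : α → ℝ := fun x => γ - w x
  have hsum (n : ℕ) (x : α) : birkhoffSum T h n x = n * γ - birkhoffSum T w n x := by
    simp [h, birkhoffSum, Finset.sum_sub_distrib]
  have hcover : {x | ∃ n, 1 ≤ n ∧ birkhoffSum T w n x < n * γ} =
      ⋃ N, {x | 0 < birkhoffMax T h N x} := by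
    ext x
    simp only [Set.mem_ofPred_eq, Set.mem_iUnion]
    constructor
    · rintro ⟨n, hn, hlt⟩
      obtain ⟨N, rfl⟩ := Nat.exists_eq_add_of_le' hn
      exact ⟨N, (by rw [hsum]; linarith : 0 < birkhoffSum T h (N + 1) x).trans_le
        (birkhoffSum_le_birkhoffMax N x)⟩
    · rintro ⟨N, hN⟩
      obtain ⟨n, hn⟩ := exists_birkhoffMax_le_birkhoffSum (T := T) (w := h) N x
      refine ⟨n + 1, n.succ_pos, ?_⟩
      linarith [hsum (n + 1) x]
  rw [hcover, Monotone.measure_iUnion fun N M hNM x hx => hx.trans_le (monotone_birkhoffMax x hNM)]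
  refine iSup_le fun N => ?_
  set E := {x | 0 < birkhoffMax T h N x}
  have hE : MeasurableSet E :=
    measurableSet_lt measurable_const (measurable_birkhoffMax hT.measurable (by fun_prop) N)
  have hmax : 0 ≤ ∫ x in E, (γ - w x) ∂μ :=
    setIntegral_birkhoffMax_pos_nonneg (w := h) hT (by fun_prop) ((integrable_const γ).sub hwi) N
  rw [integral_sub (integrable_const γ).integrableOn hwi.integrableOn, setIntegral_const,
    smul_eq_mul] at hmax
  have hEc : ∫ x in Eᶜ, w x ∂μ ≤ (1 - μ.real E) * K := by
    rw [← probReal_compl_eq_one_sub hE]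
    simpa using setIntegral_mono hwi.integrableOn (integrableOn_const (C := K)) hwK
  have hsplit := integral_add_compl hE hwi
  rw [← ofReal_measureReal]
  refine ENNReal.ofReal_le_ofReal ((le_div_iff₀ (sub_pos.2 hγK)).2 ?_)
  linarith

theorem tendsto_measure_exists_birkhoffSum_lt [IsProbabilityMeasure μ] {ι : Type*} {l : Filter ι}
    {T : ι → α → α} {w : ι → α → ℝ} (hT : ∀ i, MeasurePreserving (T i) μ μ)
    (hw : ∀ i, Measurable (w i)) (hwi : ∀ i, Integrable (w i) μ) {γ K : ℝ} (hγK : γ < K)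
    (hwK : ∀ i x, w i x ≤ K) (hlim : Tendsto (fun i => ∫ x, w i x ∂μ) l (𝓝 K)) :
    Tendsto (fun i => μ {x | ∃ n, 1 ≤ n ∧ birkhoffSum (T i) (w i) n x < n * γ}) l (𝓝 0) := by
  have hbound : Tendsto (fun i => ENNReal.ofReal ((K - ∫ x, w i x ∂μ) / (K - γ))) l (𝓝 0) := by
    simpa using ENNReal.tendsto_ofReal (((tendsto_const_nhds (x := K)).sub hlim).div_const (K - γ))
  exact tendsto_of_tendsto_of_tendsto_of_le_of_le tendsto_const_nhds hbound (fun _ => zero_le)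
    fun i => measure_exists_birkhoffSum_lt_le (hT i) (hw i) (hwi i) hγK (hwK i)

end MaximalErgodic

section Convergence

variable {α : Type*} [MeasurableSpace α] {μ : Measure α}

theorem tendsto_measure_one_of_tendsto_measure_compl [IsProbabilityMeasure μ] {ι : Type*}
    {l : Filter ι} {s : ι → Set α} (h : Tendsto (fun i => μ (s i)ᶜ) l (𝓝 0)) :
    Tendsto (fun i => μ (s i)) l (𝓝 1) := by
  have hlower : Tendsto (fun i => 1 - μ (s i)ᶜ) l (𝓝 1) := by
    simpa using ENNReal.Tendsto.sub tendsto_const_nhds h (Or.inl ENNReal.one_ne_top)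
  refine tendsto_of_tendsto_of_tendsto_of_le_of_le hlower tendsto_const_nhds (fun i => ?_)
    fun i => prob_le_one
  rw [tsub_le_iff_right, ← measure_univ (μ := μ)]
  exact measure_univ_le_add_compl (s i)

theorem tendsto_integral_min_of_tendsto_ae [IsProbabilityMeasure μ] {g : ℕ → α → ℝ} {c χ : ℝ}
    (hg : ∀ n, AEStronglyMeasurable (g n) μ) (hgc : ∀ n x, c ≤ g n x)
    (hlim : ∀ᵐ x ∂μ, Tendsto (g · x) atTop (𝓝 χ)) :
    Tendsto (fun n => ∫ x, min (g n x) χ ∂μ) atTop (𝓝 χ) := by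
  have h := tendsto_integral_of_dominated_convergence (fun _ => max |min c χ| |χ|)
    (fun n => (hg n).inf aestronglyMeasurable_const) (integrable_const _)
    (fun n => ae_of_all _ fun x =>
      abs_le_max_abs_abs (min_le_min_right χ (hgc n x)) (min_le_right _ χ))
    (hlim.mono fun x hx => by simpa using hx.min (tendsto_const_nhds (x := χ)))
  simpa using h

end Convergence

section Cocycle

variable {α : Type*}

def IsSuperadditiveCocycle (T : α → α) (φ : ℕ → α → ℝ) : Prop :=
  ∀ n m x, φ n x + φ m (T^[n] x) ≤ φ (n + m) x

theorem IsSuperadditiveCocycle.natCast_mul_le {T : α → α} {φ : ℕ → α → ℝ}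
    (hφ : IsSuperadditiveCocycle T φ) {c : ℝ} (hc : ∀ x, c ≤ φ 1 x) {n : ℕ} (hn : 1 ≤ n) :
    ∀ x, n * c ≤ φ n x := by
  induction n, hn using Nat.le_induction with
  | base => simpa using hc
  | succ n hn ih =>
    intro x
    push_cast
    linarith [hφ n 1 x, ih x, hc (T^[n] x)]

theorem birkhoffSum_iterate_apply {M : Type*} [AddCommMonoid M] (f : α → α) (g : α → M)
    (ℓ n : ℕ) (x : α) : birkhoffSum (f^[ℓ]) g n x = ∑ i ∈ Finset.range n, g (f^[i * ℓ] x) := by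
  simp [birkhoffSum, ← Function.iterate_mul, mul_comm]

theorem isSuperadditiveCocycle_log {T : α → α} {a : ℕ → α → ℝ} (ha : ∀ n x, 0 < a n x)
    (hsup : ∀ n m x, a n x * a m (T^[n] x) ≤ a (n + m) x) :
    IsSuperadditiveCocycle T fun n x => Real.log (a n x) := fun n m x => by
  rw [← Real.log_mul (ha n x).ne' (ha m _).ne']
  exact Real.log_le_log (mul_pos (ha n x) (ha m _)) (hsup n m x)

theorem isSuperadditiveCocycle_neg_log {T : α → α} {a : ℕ → α → ℝ} (ha : ∀ n x, 0 < a n x)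
    (hsub : ∀ n m x, a (n + m) x ≤ a n x * a m (T^[n] x)) :
    IsSuperadditiveCocycle T fun n x => -Real.log (a n x) := fun n m x => by
  rw [← neg_add, ← Real.log_mul (ha n x).ne' (ha m _).ne', neg_le_neg_iff]
  exact Real.log_le_log (ha _ x) (hsub n m x)

variable [MeasurableSpace α] {μ : Measure α}

theorem tendsto_measure_exists_birkhoffSum_iterate_lt [IsProbabilityMeasure μ] {f : α → α}
    (hf : MeasurePreserving f μ μ) {φ : ℕ → α → ℝ} (hφ : IsSuperadditiveCocycle f φ)
    (hφm : ∀ n, Measurable (φ n)) (hφ1 : BddBelow (Set.range (φ 1))) {χ γ : ℝ}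
    (hχ : ∀ᵐ x ∂μ, Tendsto (fun n => φ n x / n) atTop (𝓝 χ)) (hγ : γ < χ) :
    Tendsto (fun ℓ : ℕ => μ {x | ∃ n, 1 ≤ n ∧ birkhoffSum (f^[ℓ]) (φ ℓ) n x < n * ℓ * γ})
      atTop (𝓝 0) := by
  -- shifting to `ℓ + 1` avoids the junk value `φ 0 x / 0 = 0`
  rw [← tendsto_add_atTop_iff_nat 1]
  obtain ⟨c, hc⟩ := hφ1
  set w : ℕ → α → ℝ := fun ℓ x => min (φ (ℓ + 1) x / (ℓ + 1 : ℕ)) χ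
  have hφc (ℓ : ℕ) (x : α) : c ≤ φ (ℓ + 1) x / (ℓ + 1 : ℕ) := by
    rw [le_div_iff₀ (by positivity), mul_comm]
    exact hφ.natCast_mul_le (fun x => hc ⟨x, rfl⟩) ℓ.succ_pos x
  have hwm (ℓ : ℕ) : Measurable (w ℓ) := ((hφm _).div_const _).min measurable_const
  have hwi (ℓ : ℕ) : Integrable (w ℓ) μ :=
    .of_mem_Icc (min c χ) χ (hwm ℓ).aemeasurable
      (ae_of_all _ fun x => ⟨min_le_min_right χ (hφc ℓ x), min_le_right _ _⟩)
  have hint : Tendsto (fun ℓ => ∫ x, w ℓ x ∂μ) atTop (𝓝 χ) :=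
    tendsto_integral_min_of_tendsto_ae (fun ℓ => ((hφm _).div_const _).aestronglyMeasurable) hφc
      (hχ.mono fun x hx => hx.comp (tendsto_add_atTop_nat 1))
  refine tendsto_of_tendsto_of_tendsto_of_le_of_le tendsto_const_nhds
    (tendsto_measure_exists_birkhoffSum_lt (fun ℓ => hf.iterate (ℓ + 1)) hwm hwi hγ
      (fun ℓ x => min_le_right _ _) hint) (fun _ => zero_le) fun ℓ => measure_mono ?_
  rintro x ⟨n, hn, hlt⟩
  refine ⟨n, hn, ?_⟩
  have hle : birkhoffSum (f^[ℓ + 1]) (w ℓ) n x ≤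
      birkhoffSum (f^[ℓ + 1]) (φ (ℓ + 1)) n x / (ℓ + 1 : ℕ) := by
    rw [birkhoffSum, birkhoffSum, Finset.sum_div]
    exact Finset.sum_le_sum fun i _ => min_le_left _ _
  refine hle.trans_lt ((div_lt_iff₀ (by positivity)).2 ?_)
  linarith

end Cocycle

theorem stmt_5_general {X : Type*} [MetricSpace X] [CompactSpace X]
    [MeasurableSpace X] [BorelSpace X]
    (f : X → X)
    (μ : Measure X) [IsProbabilityMeasure μ] (herg : Ergodic f μ)
    (mE nF : ℕ → X → ℝ)
    (hmEpos : ∀ n x, 0 < mE n x) (hnFpos : ∀ n x, 0 < nF n x)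
    (hmEcont : ∀ n, Continuous (mE n)) (hnFcont : ∀ n, Continuous (nF n))
    (hmEsup : ∀ n m x, mE n x * mE m (f^[n] x) ≤ mE (n + m) x)
    (hnFsub : ∀ n m x, nF (n + m) x ≤ nF n x * nF m (f^[n] x))
    (χE χF : ℝ)
    (hχE : ∀ᵐ x ∂μ, Tendsto (fun n => Real.log (mE n x) / n) atTop (𝓝 χE))
    (hχF : ∀ᵐ x ∂μ, Tendsto (fun n => Real.log (nF n x) / n) atTop (𝓝 χF))
    (γ₁ γ₂ : ℝ) (hγ₁ : γ₁ < χE) (hγ₂ : χF < γ₂) :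
    Tendsto (fun ℓ : ℕ => μ {x | ∀ n : ℕ, 1 ≤ n →
        γ₁ ≤ (∑ i ∈ Finset.range n, Real.log (mE ℓ (f^[i * ℓ] x))) / (n * ℓ : ℝ) ∧
        (∑ i ∈ Finset.range n, Real.log (nF ℓ (f^[i * ℓ] x))) / (n * ℓ : ℝ) ≤ γ₂})
      atTop (𝓝 1) := by
  have hmp := herg.toMeasurePreserving
  have hlogE (n : ℕ) : Continuous fun x => Real.log (mE n x) :=
    (hmEcont n).log fun x => (hmEpos n x).ne'
  have hlogF (n : ℕ) : Continuous fun x => -Real.log (nF n x) :=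
    ((hnFcont n).log fun x => (hnFpos n x).ne').neg
  have hbadE := tendsto_measure_exists_birkhoffSum_iterate_lt hmp
    (isSuperadditiveCocycle_log hmEpos hmEsup)
    (fun n => (hlogE n).measurable) (isCompact_range (hlogE 1)).bddBelow hχE hγ₁
  have hbadF := tendsto_measure_exists_birkhoffSum_iterate_lt hmp
    (isSuperadditiveCocycle_neg_log hnFpos hnFsub)
    (fun n => (hlogF n).measurable) (isCompact_range (hlogF 1)).bddBelow
    (hχF.mono fun x hx => by simpa [neg_div] using hx.neg) (neg_lt_neg hγ₂)
  refine tendsto_measure_one_of_tendsto_measure_compl (tendsto_of_tendsto_of_tendsto_of_le_of_le'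
    tendsto_const_nhds (by simpa using hbadE.add hbadF) (.of_forall fun _ => zero_le) ?_)
  filter_upwards [eventually_ge_atTop 1] with ℓ hℓ
  refine (measure_mono fun x hx => ?_).trans (measure_union_le _ _)
  simp only [Set.mem_compl_iff, Set.mem_ofPred_eq, not_forall, not_and_or, not_le] at hx
  obtain ⟨n, hn, hx | hx⟩ := hx
  · left
    refine ⟨n, hn, ?_⟩
    rw [birkhoffSum_iterate_apply]
    rwa [div_lt_iff₀ (by positivity), mul_comm] at hx
  · right
    refine ⟨n, hn, ?_⟩
    rw [birkhoffSum_iterate_apply, Finset.sum_neg_distrib]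
    rw [lt_div_iff₀ (by positivity)] at hx
    linarith

/-- Proposition 3.9 of the paper, with the derivative data along the invariant sub-bundles
abstracted as cocycles: `mE n x` stands for the mini-norm `m(Df^n|_{E(x)})` (a positive,
continuous, super-multiplicative sequence) and `nF n x` for `‖Df^n|_{F(x)}‖` (positive,
continuous, sub-multiplicative); `χE = χ_E^-(μ)` and `χF = χ_F^+(μ)` are the a.e. constant
extremal Lyapunov exponents. If `γ₁ < χE` and `γ₂ > χF`, then
`μ(Λ_ℓ(γ₁, γ₂, E, F)) → 1` as `ℓ → ∞`. -/
theorem stmt_5 {X : Type*} [MetricSpace X] [CompactSpace X]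
    [MeasurableSpace X] [BorelSpace X]
    (f : X → X) (hf : Continuous f)
    (μ : Measure X) [IsProbabilityMeasure μ] (herg : Ergodic f μ)
    (mE nF : ℕ → X → ℝ)
    (hmEpos : ∀ n x, 0 < mE n x) (hnFpos : ∀ n x, 0 < nF n x)
    (hmEcont : ∀ n, Continuous (mE n)) (hnFcont : ∀ n, Continuous (nF n))
    (hmEsup : ∀ n m x, mE n x * mE m (f^[n] x) ≤ mE (n + m) x)
    (hnFsub : ∀ n m x, nF (n + m) x ≤ nF n x * nF m (f^[n] x))
    (χE χF : ℝ)
    (hχE : ∀ᵐ x ∂μ, Tendsto (fun n => Real.log (mE n x) / n) atTop (𝓝 χE))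
    (hχF : ∀ᵐ x ∂μ, Tendsto (fun n => Real.log (nF n x) / n) atTop (𝓝 χF))
    (γ₁ γ₂ : ℝ) (hγ₁ : γ₁ < χE) (hγ₂ : χF < γ₂) :
    Tendsto (fun ℓ : ℕ => μ {x | ∀ n : ℕ, 1 ≤ n →
        γ₁ ≤ (∑ i ∈ Finset.range n, Real.log (mE ℓ (f^[i * ℓ] x))) / (n * ℓ : ℝ) ∧
        (∑ i ∈ Finset.range n, Real.log (nF ℓ (f^[i * ℓ] x))) / (n * ℓ : ℝ) ≤ γ₂})
      atTop (𝓝 1) :=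
  stmt_5_general f μ herg mE nF hmEpos hnFpos hmEcont hnFcont hmEsup hnFsub χE χF hχE hχF γ₁ γ₂ hγ₁
    hγ₂
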